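/- (Second-derivative coefficients of the Hilbert Lagrangian.) On the open subset of the jet variables where the matrix (g_{αβ}) is invertible, for all α ≤ β and μ ≤ ν: (1/n(μν)) · ∂L/∂g_{αβ,μν} = (n(αβ)/2) · √|det(g)| · (g^{αμ}g^{βν} + g^{αν}g^{βμ} − 2 g^{αβ}g^{μν}). In particular, ∂L/∂g_{αβ,μν} depends only on the zeroth-order variables g_{αβ}, and hence the Hilbert Lagrangian L is an affine function of the second-order variables g_{αβ,μν}. -/

import Mathlib

noncomputable section

/-- Index pairs `(α, β)` with `α ≤ β`, labelling the independent components of a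
symmetric object. -/
abbrev SymIdx : Type := {ab : Fin 4 × Fin 4 // ab.1 ≤ ab.2}

/-- Multi-indices `I ∈ ℕ^4` of length `|I| ≤ k`, labelling the derivative indices
(after the comma) of the jet variables; full symmetry in the derivative indices is
built in. -/
abbrev MIdx4 (k : ℕ) : Type := {I : Fin 4 → ℕ // ∑ i, I i ≤ k}

noncomputable instance MIdx4.instFintype (k : ℕ) : Fintype (MIdx4 k) :=
  Fintype.ofInjective
    (fun (I : MIdx4 k) (i : Fin 4) =>
      (⟨I.1 i, by
        have h := Finset.single_le_sum (f := I.1) (fun j _ => Nat.zero_le _)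
          (Finset.mem_univ i)
        have := I.2
        omega⟩ : Fin (k + 1)))
    (fun I J h => Subtype.ext (funext fun i => congrArg Fin.val (congrFun h i)))

/-- The space of jet variables (up to order `k`) of a metric on `ℝ^4`: the independent
real variables are `g_{αβ,I}` for `α ≤ β` and `|I| ≤ k`. -/
abbrev MJet (k : ℕ) : Type := SymIdx × MIdx4 k → ℝ

namespace MJet

/-- The multi-index `1_μ`. -/
def e (μ : Fin 4) : Fin 4 → ℕ := fun j => if j = μ then 1 else 0

/-- The jet variable `g_{αβ,I}`, extended to all index pairs by the symmetry
`g_{βα} = g_{αβ}` (zero if `|I| > k`). -/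
def gv {k : ℕ} (p : MJet k) (a b : Fin 4) (I : Fin 4 → ℕ) : ℝ :=
  if h : ∑ i, I i ≤ k then
    (if hab : a ≤ b then p (⟨(a, b), hab⟩, ⟨I, h⟩)
     else p (⟨(b, a), (le_total a b).resolve_left hab⟩, ⟨I, h⟩))
  else 0

/-- The partial derivative `∂f/∂g_{αβ,I}` with respect to an independent jet variable
(zero unless `α ≤ β` and `|I| ≤ k`). -/
def pdg {k : ℕ} (a b : Fin 4) (I : Fin 4 → ℕ) (f : MJet k → ℝ) (p : MJet k) : ℝ :=
  fderiv ℝ f p (fun sI => if sI.1.1 = (a, b) ∧ sI.2.1 = I then 1 else 0)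

/-- The projection (truncation) to the jet variables of order at most `s`
(padding with `0` in case `s > k`). -/
def projTo {k : ℕ} (s : ℕ) (p : MJet k) : MJet s :=
  fun sI => if h : ∑ i, sI.2.1 i ≤ k then p (sI.1, ⟨sI.2.1, h⟩) else 0

/-- The total derivative
`D_ρ f := Σ_{α≤β} Σ_{|I|≤k} g_{αβ,I+1_ρ} ∂f/∂g_{αβ,I}`, mapping functions of the jet
variables up to order `k` to functions of the jet variables up to order `k+1`. -/
def Dg {k : ℕ} (ρ : Fin 4) (f : MJet k → ℝ) (p : MJet (k + 1)) : ℝ :=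
  ∑ s : SymIdx, ∑ I : MIdx4 k,
    gv p s.1.1 s.1.2 (fun j => I.1 j + e ρ j) * pdg s.1.1 s.1.2 I.1 f (projTo k p)

/-- The metric matrix `(g_{αβ})` at a jet point. -/
def gmat {k : ℕ} (p : MJet k) : Matrix (Fin 4) (Fin 4) ℝ :=
  Matrix.of fun a b => gv p a b (fun _ => 0)

/-- The entries `g^{αβ}` of the inverse metric matrix. -/
def ginv {k : ℕ} (p : MJet k) (a b : Fin 4) : ℝ := (gmat p)⁻¹ a b

/-- The Christoffel symbols
`Γ^ρ_{μν} := (1/2) g^{ρλ}(g_{νλ,μ} + g_{λμ,ν} − g_{μν,λ})`. -/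
def Chr {k : ℕ} (p : MJet k) (ρ μ ν : Fin 4) : ℝ :=
  (1 / 2) * ∑ lam : Fin 4,
    ginv p ρ lam * (gv p ν lam (e μ) + gv p lam μ (e ν) - gv p μ ν (e lam))

/-- The Ricci expressions
`R_{μν} := D_ρ Γ^ρ_{μν} − D_μ Γ^ρ_{ρν} + Γ^ρ_{μν} Γ^δ_{δρ} − Γ^ρ_{δν} Γ^δ_{μρ}`. -/
def Ricci (p : MJet 2) (μ ν : Fin 4) : ℝ :=
  (∑ ρ : Fin 4, Dg ρ (fun q : MJet 1 => Chr q ρ μ ν) p) -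
    Dg μ (fun q : MJet 1 => ∑ ρ : Fin 4, Chr q ρ ρ ν) p +
    ∑ ρ : Fin 4, ∑ δ : Fin 4, (Chr p ρ μ ν * Chr p δ δ ρ - Chr p ρ δ ν * Chr p δ μ ρ)

/-- The scalar curvature `R := g^{μν} R_{μν}`. -/
def scalR (p : MJet 2) : ℝ := ∑ μ : Fin 4, ∑ ν : Fin 4, ginv p μ ν * Ricci p μ ν

/-- `R^{αβ} := g^{αμ} g^{βν} R_{μν}`. -/
def RicciUp (p : MJet 2) (a b : Fin 4) : ℝ :=
  ∑ μ : Fin 4, ∑ ν : Fin 4, ginv p a μ * ginv p b ν * Ricci p μ ν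

/-- The Hilbert Lagrangian `L := √|det(g_{αβ})| · R`, a function of the jet variables
up to order `2`. -/
def EH (p : MJet 2) : ℝ := Real.sqrt |(gmat p).det| * scalR p

/-- The combinatorial factor `n(αβ)`. -/
def nn (a b : Fin 4) : ℝ := if a = b then 1 else 2

end MJet

namespace Stmt15Aux
open MJet

/-! ### Index lemmas -/

lemma e_sum (μ : Fin 4) : ∑ i, e μ i = 1 := by simp [e]

lemma e_add_sum (μ ν : Fin 4) : ∑ i, (e μ i + e ν i) = 2 := by
  rw [Finset.sum_add_distrib, e_sum, e_sum]

lemma e_eq_iff {τ σ : Fin 4} : e τ = e σ ↔ τ = σ := by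
  constructor
  · intro h
    have := congrFun h σ
    simp [e] at this
    exact this.symm
  · rintro rfl; rfl

lemma e_ne_zero (σ : Fin 4) : e σ ≠ (fun _ => 0) := by
  intro h
  have := congrFun h σ
  simp [e] at this

lemma eq_zero_of_sum_eq_zero {I : Fin 4 → ℕ} (h : ∑ i, I i = 0) : I = fun _ => 0 := by
  funext j
  have := Finset.sum_eq_zero_iff.mp h j (Finset.mem_univ j)
  simpa using this

lemma eq_e_of_sum_eq_one {I : Fin 4 → ℕ} (h : ∑ i, I i = 1) : ∃ σ, I = e σ := by
  rw [Fin.sum_univ_four] at h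
  have h0 := Nat.le_of_eq h
  rcases Nat.eq_zero_or_pos (I 0) with h1 | h1
  · rcases Nat.eq_zero_or_pos (I 1) with h2 | h2
    · rcases Nat.eq_zero_or_pos (I 2) with h3 | h3
      · exact ⟨3, by funext j; fin_cases j <;> simp [e] <;> omega⟩
      · exact ⟨2, by funext j; fin_cases j <;> simp [e] <;> omega⟩
    · exact ⟨1, by funext j; fin_cases j <;> simp [e] <;> omega⟩
  · exact ⟨0, by funext j; fin_cases j <;> simp [e] <;> omega⟩

lemma e_add_eq_iff (σ ρ μ ν : Fin 4) :
    ((fun j => e σ j + e ρ j) = fun j => e μ j + e ν j) ↔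
      (σ = μ ∧ ρ = ν) ∨ (σ = ν ∧ ρ = μ) := by
  constructor
  · intro h
    by_contra hc
    push_neg at hc
    have h1 := congrFun h σ
    have h2 := congrFun h ρ
    have h3 := congrFun h μ
    have h4 := congrFun h ν
    simp only [e] at h1 h2 h3 h4
    rcases hc with ⟨hc1, hc2⟩
    by_cases e1 : σ = μ <;> by_cases e2 : σ = ν <;> by_cases e3 : ρ = μ <;>
      by_cases e4 : ρ = ν <;> by_cases e5 : σ = ρ <;> by_cases e6 : μ = ν <;>
      simp_all <;> omega
  · rintro (⟨rfl, rfl⟩ | ⟨rfl, rfl⟩)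
    · rfl
    · funext j; exact Nat.add_comm _ _

end Stmt15Aux
namespace Stmt15Aux
open MJet Matrix

/-! ### gv and gmat lemmas -/

lemma gv_add {k : ℕ} (p q : MJet k) (a b : Fin 4) (I : Fin 4 → ℕ) :
    gv (p + q) a b I = gv p a b I + gv q a b I := by
  unfold gv
  by_cases h : ∑ i, I i ≤ k
  · rw [dif_pos h, dif_pos h, dif_pos h]
    by_cases hab : a ≤ b
    · rw [dif_pos hab, dif_pos hab, dif_pos hab]; rfl
    · rw [dif_neg hab, dif_neg hab, dif_neg hab]; rfl
  · rw [dif_neg h, dif_neg h, dif_neg h]; ring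

lemma gv_smul {k : ℕ} (t : ℝ) (p : MJet k) (a b : Fin 4) (I : Fin 4 → ℕ) :
    gv (t • p) a b I = t * gv p a b I := by
  unfold gv
  by_cases h : ∑ i, I i ≤ k
  · rw [dif_pos h, dif_pos h]
    by_cases hab : a ≤ b
    · rw [dif_pos hab, dif_pos hab]; rfl
    · rw [dif_neg hab, dif_neg hab]; rfl
  · rw [dif_neg h, dif_neg h]; ring

lemma gv_symm {k : ℕ} (p : MJet k) (a b : Fin 4) (I : Fin 4 → ℕ) :
    gv p a b I = gv p b a I := by
  unfold gv
  by_cases h : ∑ i, I i ≤ k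
  · rw [dif_pos h, dif_pos h]
    rcases le_or_gt a b with hab | hab
    · rcases eq_or_lt_of_le hab with rfl | hlt
      · rfl
      · rw [dif_pos hab, dif_neg (not_le.mpr hlt)]
    · rw [dif_neg (not_le.mpr hab), dif_pos hab.le]
  · simp only [dif_neg h]

lemma gv_eq_self {k : ℕ} (p : MJet k) (s : SymIdx) (I : Fin 4 → ℕ) (h : ∑ i, I i ≤ k) :
    gv p s.1.1 s.1.2 I = p (s, ⟨I, h⟩) := by
  unfold gv
  rw [dif_pos h, dif_pos s.2]

/-- The combinatorial symmetrized Kronecker delta `[sorted (x,y) = (a,b)]` for `a ≤ b`. -/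
def del2 (x y a b : Fin 4) : ℝ := if (x = a ∧ y = b) ∨ (x = b ∧ y = a) then 1 else 0

lemma del2_symm (x y a b : Fin 4) : del2 x y a b = del2 y x a b := by
  unfold del2
  by_cases h : (x = a ∧ y = b) ∨ (x = b ∧ y = a)
  · rw [if_pos h, if_pos (by tauto)]
  · rw [if_neg h, if_neg (by tauto)]

/-- The Kronecker delta. -/
def dd (x y : Fin 4) : ℝ := if x = y then 1 else 0

/-- `gv` of the basis direction vector used in `pdg`. -/
lemma gv_dir {k : ℕ} (a b : Fin 4) (hab : a ≤ b) (I₀ : Fin 4 → ℕ) (x y : Fin 4)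
    (I : Fin 4 → ℕ) (hI : ∑ i, I i ≤ k) :
    gv (fun sI : SymIdx × MIdx4 k => if sI.1.1 = (a, b) ∧ sI.2.1 = I₀ then 1 else 0)
      x y I = del2 x y a b * (if I = I₀ then 1 else 0) := by
  unfold gv del2
  rw [dif_pos hI]
  by_cases hI0 : I = I₀
  · rw [if_pos hI0, mul_one]
    rcases le_or_gt x y with hxy | hxy
    · rw [dif_pos hxy]
      beta_reduce
      by_cases hc : x = a ∧ y = b
      · rw [if_pos (by simp [Prod.ext_iff, hc.1, hc.2, hI0]), if_pos (Or.inl hc)]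
      · rw [if_neg, if_neg]
        · rintro (h | ⟨rfl, rfl⟩)
          · exact hc h
          · exact hc ⟨le_antisymm hxy hab, le_antisymm hab hxy⟩
        · simp only [Prod.mk.injEq]
          rintro ⟨⟨rfl, rfl⟩, -⟩
          exact hc ⟨rfl, rfl⟩
    · rw [dif_neg (not_le.mpr hxy)]
      beta_reduce
      by_cases hc : x = b ∧ y = a
      · rw [if_pos (by simp [Prod.ext_iff, hc.1, hc.2, hI0]), if_pos (Or.inr hc)]
      · rw [if_neg, if_neg]
        · rintro (⟨rfl, rfl⟩ | h)
          · exact absurd hab (not_le.mpr hxy)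
          · exact hc h
        · simp only [Prod.mk.injEq]
          rintro ⟨⟨rfl, rfl⟩, -⟩
          exact hc ⟨rfl, rfl⟩
  · rw [if_neg hI0, mul_zero]
    by_cases hxy : x ≤ y
    · rw [dif_pos hxy]
      beta_reduce
      rw [if_neg]
      simp only [Prod.mk.injEq]
      rintro ⟨-, h⟩
      exact hI0 h
    · rw [dif_neg hxy]
      beta_reduce
      rw [if_neg]
      simp only [Prod.mk.injEq]
      rintro ⟨-, h⟩
      exact hI0 h

/-- Support hypothesis: vanishing except at order exactly 2. -/
def Supp2 (w : MJet 2) : Prop := ∀ (s : SymIdx) (I : MIdx4 2), (∑ i, I.1 i) ≠ 2 → w (s, I) = 0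

lemma gv_supp2 {w : MJet 2} (hw : Supp2 w) (x y : Fin 4) {I : Fin 4 → ℕ}
    (hI : ∑ i, I i ≠ 2) : gv w x y I = 0 := by
  unfold gv
  by_cases h : ∑ i, I i ≤ 2
  · rw [dif_pos h]
    by_cases hxy : x ≤ y
    · rw [dif_pos hxy]; exact hw _ _ hI
    · rw [dif_neg hxy]; exact hw _ _ hI
  · rw [dif_neg h]

lemma gmat_add_supp2 {q w : MJet 2} (hw : Supp2 w) : gmat (q + w) = gmat q := by
  ext a b
  show gv (q + w) a b (fun _ => 0) = gv q a b (fun _ => 0)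
  rw [gv_add, gv_supp2 hw a b (by simp)]
  ring

lemma projTo_one_add_supp2 {q w : MJet 2} (hw : Supp2 w) :
    projTo 1 (q + w) = projTo 1 q := by
  funext sI
  unfold projTo
  by_cases h : ∑ i, sI.2.1 i ≤ 2
  · rw [dif_pos h, dif_pos h]
    have h1 : ∑ i, sI.2.1 i ≤ 1 := sI.2.2
    have : w (sI.1, ⟨sI.2.1, h⟩) = 0 := hw _ _ (by show ∑ i, sI.2.1 i ≠ 2; omega)
    show q _ + w _ = q _
    rw [this, add_zero]
  · rw [dif_neg h, dif_neg h]

lemma gmat_projTo_one (q : MJet 2) : gmat (projTo 1 q) = gmat q := by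
  ext a b
  show gv (projTo 1 q) a b (fun _ => 0) = gv q a b (fun _ => 0)
  unfold gv projTo
  norm_num

lemma gmat_transpose {k : ℕ} (p : MJet k) : (gmat p)ᵀ = gmat p := by
  ext a b
  simp only [Matrix.transpose_apply, gmat, Matrix.of_apply]
  exact gv_symm p b a _

lemma ginv_symm {k : ℕ} (p : MJet k) (a b : Fin 4) : ginv p a b = ginv p b a := by
  show (gmat p)⁻¹ a b = (gmat p)⁻¹ b a
  calc (gmat p)⁻¹ a b = ((gmat p)ᵀ)⁻¹ a b := by rw [gmat_transpose]
    _ = ((gmat p)⁻¹)ᵀ a b := by rw [Matrix.transpose_nonsing_inv]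
    _ = (gmat p)⁻¹ b a := rfl

lemma ginv_eq_of_gmat_eq {k l : ℕ} {p : MJet k} {q : MJet l} (h : gmat p = gmat q) :
    ∀ a b, ginv p a b = ginv q a b := by
  intro a b; unfold ginv; rw [h]

end Stmt15Aux
namespace Stmt15Aux
open MJet Matrix

/-! ### Smoothness infrastructure -/

lemma contDiff_coord {k : ℕ} (sI : SymIdx × MIdx4 k) :
    ContDiff ℝ ⊤ (fun q : MJet k => q sI) :=
  (ContinuousLinearMap.proj (R := ℝ) (φ := fun _ : SymIdx × MIdx4 k => ℝ) sI).contDiff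

lemma contDiff_gv {k : ℕ} (x y : Fin 4) (I : Fin 4 → ℕ) :
    ContDiff ℝ ⊤ (fun q : MJet k => gv q x y I) := by
  by_cases h : ∑ i, I i ≤ k
  · by_cases hxy : x ≤ y
    · simp only [gv, dif_pos h, dif_pos hxy]
      exact contDiff_coord _
    · simp only [gv, dif_pos h, dif_neg hxy]
      exact contDiff_coord _
  · simp only [gv, dif_neg h]
    exact contDiff_const

lemma contDiff_entries_det {E : Type*} [NormedAddCommGroup E] [NormedSpace ℝ E]
    {f : E → Matrix (Fin 4) (Fin 4) ℝ} (hf : ∀ i j, ContDiff ℝ ⊤ fun x => f x i j) :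
    ContDiff ℝ ⊤ fun x => (f x).det := by
  simp only [Matrix.det_apply]
  apply ContDiff.sum
  intro σ _
  simp only [Units.smul_def, zsmul_eq_mul]
  exact contDiff_const.mul (contDiff_prod fun i _ => hf (σ i) i)

lemma contDiff_gmat_det {k : ℕ} : ContDiff ℝ ⊤ fun q : MJet k => (gmat q).det :=
  contDiff_entries_det fun i j => by
    simp only [gmat, Matrix.of_apply]; exact contDiff_gv i j _

lemma contDiff_gmat_adjugate {k : ℕ} (i j : Fin 4) :
    ContDiff ℝ ⊤ fun q : MJet k => (gmat q).adjugate i j := by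
  simp only [Matrix.adjugate_apply]
  apply contDiff_entries_det
  intro i' j'
  simp only [Matrix.updateRow_apply]
  by_cases h : i' = j
  · simp only [h, if_pos rfl]
    exact contDiff_const
  · simp only [if_neg h]
    simp only [gmat, Matrix.of_apply]
    exact contDiff_gv _ _ _

lemma ginv_eq_det_inv_adjugate {k : ℕ} (q : MJet k) (i j : Fin 4) :
    ginv q i j = ((gmat q).det)⁻¹ * (gmat q).adjugate i j := by
  show (gmat q)⁻¹ i j = _
  rw [Matrix.inv_def, Ring.inverse_eq_inv']
  simp [Matrix.smul_apply, smul_eq_mul]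

lemma contDiffAt_ginv {k : ℕ} {p : MJet k} (h : (gmat p).det ≠ 0) (i j : Fin 4) :
    ContDiffAt ℝ ⊤ (fun q : MJet k => ginv q i j) p := by
  simp only [ginv_eq_det_inv_adjugate]
  exact (contDiff_gmat_det.contDiffAt.inv h).mul (contDiff_gmat_adjugate i j).contDiffAt

lemma contDiffAt_Chr {k : ℕ} {p : MJet k} (h : (gmat p).det ≠ 0) (ρ μ ν : Fin 4) :
    ContDiffAt ℝ ⊤ (fun q : MJet k => Chr q ρ μ ν) p := by
  unfold Chr
  apply ContDiffAt.mul contDiffAt_const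
  apply ContDiffAt.sum
  intro lam _
  exact (contDiffAt_ginv h ρ lam).mul
    (((contDiff_gv ν lam _).contDiffAt.add (contDiff_gv lam μ _).contDiffAt).sub
      (contDiff_gv μ ν _).contDiffAt)

/-- The truncation as a continuous linear map. -/
def projCLM (k s : ℕ) : MJet k →L[ℝ] MJet s :=
  LinearMap.toContinuousLinearMap
    { toFun := projTo s
      map_add' := by
        intro x y
        funext sI
        show projTo s (x + y) sI = projTo s x sI + projTo s y sI
        unfold projTo
        by_cases h : ∑ i, sI.2.1 i ≤ k
        · simp only [dif_pos h]; rfl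
        · simp only [dif_neg h]; ring
      map_smul' := by
        intro c x
        funext sI
        show projTo s (c • x) sI = c * projTo s x sI
        unfold projTo
        by_cases h : ∑ i, sI.2.1 i ≤ k
        · simp only [dif_pos h]; rfl
        · simp only [dif_neg h]; ring }

lemma projCLM_apply {k s : ℕ} (q : MJet k) : projCLM k s q = projTo s q := rfl

lemma differentiableAt_pdg_proj {p : MJet 2} {f : MJet 1 → ℝ}
    (hf : ContDiffAt ℝ ⊤ f (projTo 1 p)) (a b : Fin 4) (I : Fin 4 → ℕ) :
    DifferentiableAt ℝ (fun q : MJet 2 => pdg a b I f (projTo 1 q)) p := by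
  unfold pdg
  have h1 : ContDiffAt ℝ 1 (fderiv ℝ f) (projTo 1 p) := hf.fderiv_right (by norm_num)
  have h2 : ContDiffAt ℝ 1 (fun q : MJet 2 => fderiv ℝ f (projTo 1 q)) p := by
    have := h1.comp p ((projCLM 2 1).contDiff.contDiffAt (x := p))
    exact this
  have h3 : ContDiffAt ℝ 1 (fun q : MJet 2 =>
      fderiv ℝ f (projTo 1 q) (fun sI => if sI.1.1 = (a, b) ∧ sI.2.1 = I then 1 else 0)) p := by
    have := ((ContinuousLinearMap.apply ℝ ℝ
      (fun sI : SymIdx × MIdx4 1 => if sI.1.1 = (a, b) ∧ sI.2.1 = I then (1:ℝ) else 0)).contDiff.contDiffAt).comp p h2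
    exact this
  exact h3.differentiableAt one_ne_zero

end Stmt15Aux
namespace Stmt15Aux
open MJet Matrix

lemma contDiffAt_sqrtAbsDet {p : MJet 2} (h : (gmat p).det ≠ 0) :
    ContDiffAt ℝ ⊤ (fun q : MJet 2 => Real.sqrt |(gmat q).det|) p := by
  have habs : ContDiffAt ℝ ⊤ (fun q : MJet 2 => |(gmat q).det|) p := by
    rcases h.lt_or_gt with hneg | hpos
    · have hev : (fun q : MJet 2 => |(gmat q).det|) =ᶠ[nhds p]
          (fun q => -(gmat q).det) := by
        filter_upwards [contDiff_gmat_det.continuous.continuousAt.preimage_mem_nhds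
          (Iio_mem_nhds hneg)] with q hq
        exact abs_of_neg hq
      exact contDiff_gmat_det.neg.contDiffAt.congr_of_eventuallyEq hev
    · have hev : (fun q : MJet 2 => |(gmat q).det|) =ᶠ[nhds p]
          (fun q => (gmat q).det) := by
        filter_upwards [contDiff_gmat_det.continuous.continuousAt.preimage_mem_nhds
          (Ioi_mem_nhds hpos)] with q hq
        exact abs_of_pos hq
      exact contDiff_gmat_det.contDiffAt.congr_of_eventuallyEq hev
  have hsq : ContDiffAt ℝ ⊤ Real.sqrt |(gmat p).det| :=
    Real.contDiffAt_sqrt (abs_ne_zero.mpr h)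
  exact hsq.comp p habs

lemma differentiableAt_EH {p : MJet 2} (h : (gmat p).det ≠ 0) :
    DifferentiableAt ℝ EH p := by
  have hdet1 : (gmat (projTo 1 p)).det ≠ 0 := by rw [gmat_projTo_one]; exact h
  have hDg : ∀ (ρ : Fin 4) (f : MJet 1 → ℝ), ContDiffAt ℝ ⊤ f (projTo 1 p) →
      DifferentiableAt ℝ (fun q : MJet 2 => Dg ρ f q) p := by
    intro ρ f hf
    unfold Dg
    apply DifferentiableAt.fun_sum; intro s _
    apply DifferentiableAt.fun_sum; intro I _
    exact ((contDiff_gv _ _ _).differentiable (by simp) _).mul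
      (differentiableAt_pdg_proj hf _ _ _)
  have hChr2 : ∀ ρ μ ν : Fin 4, DifferentiableAt ℝ (fun q : MJet 2 => Chr q ρ μ ν) p :=
    fun ρ μ ν => (contDiffAt_Chr h ρ μ ν).differentiableAt (by simp)
  have hRicci : ∀ μ ν : Fin 4, DifferentiableAt ℝ (fun q : MJet 2 => Ricci q μ ν) p := by
    intro μ ν
    unfold Ricci
    apply DifferentiableAt.add
    · apply DifferentiableAt.sub
      · apply DifferentiableAt.fun_sum; intro ρ _
        exact hDg ρ _ (contDiffAt_Chr hdet1 ρ μ ν)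
      · apply hDg
        apply ContDiffAt.sum; intro ρ _
        exact contDiffAt_Chr hdet1 ρ ρ ν
    · apply DifferentiableAt.fun_sum; intro ρ _
      apply DifferentiableAt.fun_sum; intro δ _
      exact ((hChr2 _ _ _).mul (hChr2 _ _ _)).sub ((hChr2 _ _ _).mul (hChr2 _ _ _))
  have hscalR : DifferentiableAt ℝ scalR p := by
    unfold scalR
    apply DifferentiableAt.fun_sum; intro μ _
    apply DifferentiableAt.fun_sum; intro ν _
    exact ((contDiffAt_ginv h μ ν).differentiableAt (by simp)).mul (hRicci μ ν)
  exact ((contDiffAt_sqrtAbsDet h).differentiableAt (by simp)).mul hscalR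

/-- The line trick: a function differentiable at `r` which is affine along the ray
`r + t • v` has directional derivative the slope. -/
lemma fderiv_apply_of_line {k : ℕ} {f : MJet k → ℝ} {r v : MJet k}
    (hf : DifferentiableAt ℝ f r) {B : ℝ}
    (h : ∀ t : ℝ, f (r + t • v) = f r + t * B) :
    fderiv ℝ f r v = B := by
  have hline : HasDerivAt (fun t : ℝ => r + t • v) v 0 := by
    simpa using ((hasDerivAt_id (0:ℝ)).smul_const v).const_add r
  have h1 : HasDerivAt (fun t : ℝ => f (r + t • v)) (fderiv ℝ f r v) 0 := by
    have hf' : HasFDerivAt f (fderiv ℝ f r) (r + (0:ℝ) • v) := by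
      simpa using hf.hasFDerivAt
    have := hf'.comp_hasDerivAt 0 hline
    exact this
  have h2 : HasDerivAt (fun t : ℝ => f r + t * B) B 0 := by
    simpa using ((hasDerivAt_id (0:ℝ)).mul_const B).const_add (f r)
  have h3 : HasDerivAt (fun t : ℝ => f (r + t • v)) B 0 := by
    rw [funext h]; exact h2
  exact h1.unique h3

end Stmt15Aux
namespace Stmt15Aux
open MJet Matrix

/-- Explicit value of `∂Γ^ρ_{μν}/∂g_{ab,σ}`. -/
def Cp {k : ℕ} (q : MJet k) (a b σ ρ μ ν : Fin 4) : ℝ :=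
  (1 / 2) * ∑ lam : Fin 4, ginv q ρ lam *
    (del2 ν lam a b * dd μ σ + del2 lam μ a b * dd ν σ - del2 μ ν a b * dd lam σ)

lemma ite_e_eq (τ σ : Fin 4) : (if e τ = e σ then (1:ℝ) else 0) = dd τ σ := by
  by_cases h : τ = σ
  · rw [if_pos (by rw [h]), dd, if_pos h]
  · rw [if_neg (fun hh => h (e_eq_iff.mp hh)), dd, if_neg h]

lemma Chr_line {r : MJet 1} {a b : Fin 4} (hab : a ≤ b) (σ : Fin 4) (t : ℝ)
    (ρ μ ν : Fin 4) :
    Chr (r + t • fun sI : SymIdx × MIdx4 1 =>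
        if sI.1.1 = (a, b) ∧ sI.2.1 = e σ then (1:ℝ) else 0) ρ μ ν =
      Chr r ρ μ ν + t * Cp r a b σ ρ μ ν := by
  set v : MJet 1 := fun sI => if sI.1.1 = (a, b) ∧ sI.2.1 = e σ then (1:ℝ) else 0 with hv
  have hgm : gmat (r + t • v) = gmat r := by
    ext x y
    show gv (r + t • v) x y (fun _ => 0) = gv r x y (fun _ => 0)
    rw [gv_add, gv_smul, gv_dir a b hab (e σ) x y _ (by simp),
      if_neg (fun hh => e_ne_zero σ hh.symm), mul_zero, mul_zero, add_zero]
  have hginv : ∀ x y, ginv (r + t • v) x y = ginv r x y := ginv_eq_of_gmat_eq hgm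
  have hg : ∀ x y τ, gv (r + t • v) x y (e τ) =
      gv r x y (e τ) + t * (del2 x y a b * dd τ σ) := by
    intro x y τ
    rw [gv_add, gv_smul, gv_dir a b hab (e σ) x y (e τ) (by rw [e_sum]), ite_e_eq]
  unfold Chr Cp
  simp only [Finset.mul_sum, ← Finset.sum_add_distrib]
  apply Finset.sum_congr rfl
  intro lam _
  rw [hginv, hg, hg, hg]
  ring

lemma pdg_Chr {r : MJet 1} (h : (gmat r).det ≠ 0) {a b : Fin 4} (hab : a ≤ b)
    (σ ρ μ ν : Fin 4) :
    pdg a b (e σ) (fun q : MJet 1 => Chr q ρ μ ν) r = Cp r a b σ ρ μ ν := by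
  unfold pdg
  exact fderiv_apply_of_line ((contDiffAt_Chr h ρ μ ν).differentiableAt (by simp))
    (fun t => Chr_line hab σ t ρ μ ν)

lemma pdg_ChrTr {r : MJet 1} (h : (gmat r).det ≠ 0) {a b : Fin 4} (hab : a ≤ b)
    (σ ν : Fin 4) :
    pdg a b (e σ) (fun q : MJet 1 => ∑ ρ : Fin 4, Chr q ρ ρ ν) r =
      ∑ ρ : Fin 4, Cp r a b σ ρ ρ ν := by
  unfold pdg
  apply fderiv_apply_of_line
  · exact (ContDiffAt.sum fun ρ _ => contDiffAt_Chr h ρ ρ ν).differentiableAt (by simp)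
  · intro t
    simp only [Finset.mul_sum, ← Finset.sum_add_distrib]
    exact Finset.sum_congr rfl fun ρ _ => Chr_line hab σ t ρ ρ ν

end Stmt15Aux
namespace Stmt15Aux
open MJet Matrix

/-- Inner coefficient of the affine decomposition. -/
def Kin (q : MJet 2) (a b : Fin 4) (J : Fin 4 → ℕ) (μ' ν' : Fin 4) : ℝ :=
  (∑ ρ : Fin 4, ∑ σ : Fin 4,
      if (fun j => e σ j + e ρ j) = J then Cp q a b σ ρ μ' ν' else 0) -
    ∑ σ : Fin 4, if (fun j => e σ j + e μ' j) = J then ∑ ρ : Fin 4, Cp q a b σ ρ ρ ν' else 0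

/-- The coefficient of `w (s, J)` in `EH (q + w)`. -/
def Kc (q : MJet 2) (a b : Fin 4) (J : Fin 4 → ℕ) : ℝ :=
  Real.sqrt |(gmat q).det| *
    ∑ μ' : Fin 4, ∑ ν' : Fin 4, ginv q μ' ν' * Kin q a b J μ' ν'

lemma sum_MIdx1 (T : MIdx4 1 → ℝ) (h0 : ∀ I : MIdx4 1, I.1 = (fun _ => 0) → T I = 0) :
    ∑ I : MIdx4 1, T I = ∑ σ : Fin 4, T ⟨e σ, by rw [e_sum]⟩ := by
  classical
  have h1 : ∑ I : MIdx4 1, T I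
      = ∑ I ∈ Finset.univ.filter (fun I : MIdx4 1 => ∑ i, I.1 i = 1), T I := by
    symm
    apply Finset.sum_subset (Finset.filter_subset _ _)
    intro I _ hI
    simp only [Finset.mem_filter, Finset.mem_univ, true_and] at hI
    have h2 := I.2
    exact h0 I (eq_zero_of_sum_eq_zero (by omega))
  rw [h1]
  symm
  apply Finset.sum_bij (fun (σ : Fin 4) _ => (⟨e σ, by rw [e_sum]⟩ : MIdx4 1))
  · intro σ _
    simp [Finset.mem_filter, e_sum]
  · intro σ₁ _ σ₂ _ hσ
    exact e_eq_iff.mp (congrArg Subtype.val hσ)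
  · intro J hJ
    simp only [Finset.mem_filter, Finset.mem_univ, true_and] at hJ
    obtain ⟨σ, hσ⟩ := eq_e_of_sum_eq_one hJ
    exact ⟨σ, Finset.mem_univ σ, Subtype.ext hσ.symm⟩
  · intro σ _
    rfl

lemma sum_reindex (w : MJet 2) (s : SymIdx) (τ : Fin 4) (c : Fin 4 → ℝ) :
    ∑ σ : Fin 4, gv w s.1.1 s.1.2 (fun j => e σ j + e τ j) * c σ =
      ∑ J : MIdx4 2, w (s, J) *
        ∑ σ : Fin 4, (if (fun j => e σ j + e τ j) = J.1 then c σ else 0) := by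
  classical
  simp only [Finset.mul_sum]
  rw [Finset.sum_comm]
  apply Finset.sum_congr rfl
  intro σ _
  have hJ0 : ∑ i, (fun j => e σ j + e τ j) i ≤ 2 := by rw [e_add_sum]
  rw [Finset.sum_eq_single (⟨fun j => e σ j + e τ j, hJ0⟩ : MIdx4 2)]
  · rw [if_pos rfl, gv_eq_self w s _ hJ0]
  · intro J _ hJ
    rw [if_neg, mul_zero]
    intro hc
    exact hJ (Subtype.ext hc.symm)
  · intro hmem
    exact absurd (Finset.mem_univ _) hmem

end Stmt15Aux
namespace Stmt15Aux
open MJet Matrix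

section Key
variable {q w : MJet 2}

lemma Chr_add_supp2 (hw : Supp2 w) (ρ μ ν : Fin 4) :
    Chr (q + w) ρ μ ν = Chr q ρ μ ν := by
  unfold Chr
  congr 1
  apply Finset.sum_congr rfl
  intro lam _
  rw [ginv_eq_of_gmat_eq (gmat_add_supp2 hw), gv_add, gv_add, gv_add,
    gv_supp2 hw _ _ (by rw [e_sum]; norm_num), gv_supp2 hw _ _ (by rw [e_sum]; norm_num),
    gv_supp2 hw _ _ (by rw [e_sum]; norm_num)]
  ring

lemma Cp_projTo_one (a' b' σ ρ' μ' ν' : Fin 4) :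
    Cp (projTo 1 q) a' b' σ ρ' μ' ν' = Cp q a' b' σ ρ' μ' ν' := by
  unfold Cp
  congr 1

lemma Dg_add_supp2 (hw : Supp2 w) (ρ : Fin 4) (f : MJet 1 → ℝ) :
    Dg ρ f (q + w) = Dg ρ f q + ∑ s : SymIdx, ∑ I : MIdx4 1,
      gv w s.1.1 s.1.2 (fun j => I.1 j + e ρ j) * pdg s.1.1 s.1.2 I.1 f (projTo 1 q) := by
  unfold Dg
  rw [projTo_one_add_supp2 hw, ← Finset.sum_add_distrib]
  apply Finset.sum_congr rfl
  intro s _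
  rw [← Finset.sum_add_distrib]
  apply Finset.sum_congr rfl
  intro I _
  rw [gv_add]
  ring

lemma corr1 (hq : (gmat q).det ≠ 0) (hw : Supp2 w) (ρ μ ν : Fin 4) :
    Dg ρ (fun r : MJet 1 => Chr r ρ μ ν) (q + w) =
      Dg ρ (fun r : MJet 1 => Chr r ρ μ ν) q + ∑ s : SymIdx, ∑ J : MIdx4 2, w (s, J) *
        ∑ σ : Fin 4, (if (fun j => e σ j + e ρ j) = J.1
          then Cp q s.1.1 s.1.2 σ ρ μ ν else 0) := by
  have hdet1 : (gmat (projTo 1 q)).det ≠ 0 := by rw [gmat_projTo_one]; exact hq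
  rw [Dg_add_supp2 hw]
  congr 1
  apply Finset.sum_congr rfl
  intro s _
  rw [← sum_reindex w s ρ (fun σ => Cp q s.1.1 s.1.2 σ ρ μ ν)]
  have hzero : ∀ I : MIdx4 1, I.1 = (fun _ => 0) →
      gv w s.1.1 s.1.2 (fun j => I.1 j + e ρ j) *
        pdg s.1.1 s.1.2 I.1 (fun r : MJet 1 => Chr r ρ μ ν) (projTo 1 q) = 0 := by
    intro I hI
    rw [gv_supp2 hw _ _ (by rw [show (fun j => I.1 j + e ρ j) = e ρ by
        funext j; rw [hI]; simp, e_sum]; norm_num), zero_mul]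
  rw [sum_MIdx1 (fun I : MIdx4 1 => gv w s.1.1 s.1.2 (fun j => I.1 j + e ρ j) *
      pdg s.1.1 s.1.2 I.1 (fun r : MJet 1 => Chr r ρ μ ν) (projTo 1 q)) hzero]
  apply Finset.sum_congr rfl
  intro σ _
  rw [pdg_Chr hdet1 s.2, Cp_projTo_one]

lemma corr2 (hq : (gmat q).det ≠ 0) (hw : Supp2 w) (μ ν : Fin 4) :
    Dg μ (fun r : MJet 1 => ∑ ρ : Fin 4, Chr r ρ ρ ν) (q + w) =
      Dg μ (fun r : MJet 1 => ∑ ρ : Fin 4, Chr r ρ ρ ν) q +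
        ∑ s : SymIdx, ∑ J : MIdx4 2, w (s, J) *
          ∑ σ : Fin 4, (if (fun j => e σ j + e μ j) = J.1
            then ∑ ρ : Fin 4, Cp q s.1.1 s.1.2 σ ρ ρ ν else 0) := by
  have hdet1 : (gmat (projTo 1 q)).det ≠ 0 := by rw [gmat_projTo_one]; exact hq
  rw [Dg_add_supp2 hw]
  congr 1
  apply Finset.sum_congr rfl
  intro s _
  rw [← sum_reindex w s μ (fun σ => ∑ ρ : Fin 4, Cp q s.1.1 s.1.2 σ ρ ρ ν)]
  have hzero : ∀ I : MIdx4 1, I.1 = (fun _ => 0) →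
      gv w s.1.1 s.1.2 (fun j => I.1 j + e μ j) *
        pdg s.1.1 s.1.2 I.1 (fun r : MJet 1 => ∑ ρ : Fin 4, Chr r ρ ρ ν) (projTo 1 q) = 0 := by
    intro I hI
    rw [gv_supp2 hw _ _ (by rw [show (fun j => I.1 j + e μ j) = e μ by
        funext j; rw [hI]; simp, e_sum]; norm_num), zero_mul]
  rw [sum_MIdx1 (fun I : MIdx4 1 => gv w s.1.1 s.1.2 (fun j => I.1 j + e μ j) *
      pdg s.1.1 s.1.2 I.1 (fun r : MJet 1 => ∑ ρ : Fin 4, Chr r ρ ρ ν) (projTo 1 q)) hzero]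
  apply Finset.sum_congr rfl
  intro σ _
  rw [pdg_ChrTr hdet1 s.2]
  congr 1

lemma Ricci_add_supp2 (hq : (gmat q).det ≠ 0) (hw : Supp2 w) (μ ν : Fin 4) :
    Ricci (q + w) μ ν = Ricci q μ ν +
      ∑ s : SymIdx, ∑ J : MIdx4 2, w (s, J) * Kin q s.1.1 s.1.2 J.1 μ ν := by
  unfold Ricci
  rw [corr2 hq hw]
  have h1 : (∑ ρ : Fin 4, Dg ρ (fun r : MJet 1 => Chr r ρ μ ν) (q + w)) =
      (∑ ρ : Fin 4, Dg ρ (fun r : MJet 1 => Chr r ρ μ ν) q) +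
        ∑ s : SymIdx, ∑ J : MIdx4 2, w (s, J) * ∑ ρ : Fin 4,
          ∑ σ : Fin 4, (if (fun j => e σ j + e ρ j) = J.1
            then Cp q s.1.1 s.1.2 σ ρ μ ν else 0) := by
    have : ∀ ρ : Fin 4, Dg ρ (fun r : MJet 1 => Chr r ρ μ ν) (q + w) =
        Dg ρ (fun r : MJet 1 => Chr r ρ μ ν) q + ∑ s : SymIdx, ∑ J : MIdx4 2, w (s, J) *
          ∑ σ : Fin 4, (if (fun j => e σ j + e ρ j) = J.1
            then Cp q s.1.1 s.1.2 σ ρ μ ν else 0) := fun ρ => corr1 hq hw ρ μ ν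
    rw [Finset.sum_congr rfl fun ρ _ => this ρ, Finset.sum_add_distrib]
    congr 1
    rw [Finset.sum_comm]
    apply Finset.sum_congr rfl
    intro s _
    rw [Finset.sum_comm]
    apply Finset.sum_congr rfl
    intro J _
    rw [← Finset.mul_sum]
  rw [h1]
  have h2 : ∀ ρ δ : Fin 4,
      Chr (q + w) ρ μ ν * Chr (q + w) δ δ ρ - Chr (q + w) ρ δ ν * Chr (q + w) δ μ ρ =
        Chr q ρ μ ν * Chr q δ δ ρ - Chr q ρ δ ν * Chr q δ μ ρ := by
    intro ρ δ
    rw [Chr_add_supp2 hw, Chr_add_supp2 hw, Chr_add_supp2 hw, Chr_add_supp2 hw]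
  rw [Finset.sum_congr rfl fun ρ _ => Finset.sum_congr rfl fun δ _ => h2 ρ δ]
  unfold Kin
  have h3 : (∑ s : SymIdx, ∑ J : MIdx4 2, w (s, J) * ∑ ρ : Fin 4,
        ∑ σ : Fin 4, (if (fun j => e σ j + e ρ j) = J.1
          then Cp q s.1.1 s.1.2 σ ρ μ ν else 0)) -
      (∑ s : SymIdx, ∑ J : MIdx4 2, w (s, J) *
        ∑ σ : Fin 4, (if (fun j => e σ j + e μ j) = J.1
          then ∑ ρ : Fin 4, Cp q s.1.1 s.1.2 σ ρ ρ ν else 0)) =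
      ∑ s : SymIdx, ∑ J : MIdx4 2, w (s, J) *
        ((∑ ρ : Fin 4, ∑ σ : Fin 4, (if (fun j => e σ j + e ρ j) = J.1
            then Cp q s.1.1 s.1.2 σ ρ μ ν else 0)) -
          ∑ σ : Fin 4, (if (fun j => e σ j + e μ j) = J.1
            then ∑ ρ : Fin 4, Cp q s.1.1 s.1.2 σ ρ ρ ν else 0)) := by
    rw [← Finset.sum_sub_distrib]
    apply Finset.sum_congr rfl
    intro s _
    rw [← Finset.sum_sub_distrib]
    apply Finset.sum_congr rfl
    intro J _
    rw [← mul_sub]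
  rw [← h3]
  ring

end Key
end Stmt15Aux
namespace Stmt15Aux
open MJet Matrix

lemma swap_help (w : MJet 2) (f : Fin 4 → Fin 4 → SymIdx → MIdx4 2 → ℝ) :
    ∑ μ : Fin 4, ∑ ν : Fin 4, ∑ s : SymIdx, ∑ J : MIdx4 2, w (s, J) * f μ ν s J =
      ∑ s : SymIdx, ∑ J : MIdx4 2, w (s, J) * ∑ μ : Fin 4, ∑ ν : Fin 4, f μ ν s J := by
  calc ∑ μ : Fin 4, ∑ ν : Fin 4, ∑ s : SymIdx, ∑ J : MIdx4 2, w (s, J) * f μ ν s J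
      = ∑ μ : Fin 4, ∑ s : SymIdx, ∑ ν : Fin 4, ∑ J : MIdx4 2, w (s, J) * f μ ν s J :=
        Finset.sum_congr rfl fun μ _ => Finset.sum_comm
    _ = ∑ s : SymIdx, ∑ μ : Fin 4, ∑ ν : Fin 4, ∑ J : MIdx4 2, w (s, J) * f μ ν s J :=
        Finset.sum_comm
    _ = ∑ s : SymIdx, ∑ μ : Fin 4, ∑ J : MIdx4 2, ∑ ν : Fin 4, w (s, J) * f μ ν s J :=
        Finset.sum_congr rfl fun s _ => Finset.sum_congr rfl fun μ _ => Finset.sum_comm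
    _ = ∑ s : SymIdx, ∑ J : MIdx4 2, ∑ μ : Fin 4, ∑ ν : Fin 4, w (s, J) * f μ ν s J :=
        Finset.sum_congr rfl fun s _ => Finset.sum_comm
    _ = ∑ s : SymIdx, ∑ J : MIdx4 2, w (s, J) * ∑ μ : Fin 4, ∑ ν : Fin 4, f μ ν s J := by
        apply Finset.sum_congr rfl; intro s _
        apply Finset.sum_congr rfl; intro J _
        rw [Finset.mul_sum]
        apply Finset.sum_congr rfl; intro μ _
        rw [Finset.mul_sum]

lemma EH_add_supp2 {q w : MJet 2} (hq : (gmat q).det ≠ 0) (hw : Supp2 w) :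
    EH (q + w) = EH q +
      ∑ s : SymIdx, ∑ J : MIdx4 2, w (s, J) * Kc q s.1.1 s.1.2 J.1 := by
  have hgm := gmat_add_supp2 (q := q) hw
  have hG := ginv_eq_of_gmat_eq hgm
  have h1 : scalR (q + w) = scalR q + ∑ s : SymIdx, ∑ J : MIdx4 2, w (s, J) *
      ∑ μ : Fin 4, ∑ ν : Fin 4, ginv q μ ν * Kin q s.1.1 s.1.2 J.1 μ ν := by
    unfold scalR
    have hterm : ∀ μ ν : Fin 4, ginv (q + w) μ ν * Ricci (q + w) μ ν =
        ginv q μ ν * Ricci q μ ν + ∑ s : SymIdx, ∑ J : MIdx4 2,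
          w (s, J) * (ginv q μ ν * Kin q s.1.1 s.1.2 J.1 μ ν) := by
      intro μ ν
      rw [hG, Ricci_add_supp2 hq hw, mul_add, Finset.mul_sum]
      congr 1
      apply Finset.sum_congr rfl; intro s _
      rw [Finset.mul_sum]
      apply Finset.sum_congr rfl; intro J _
      ring
    calc ∑ μ : Fin 4, ∑ ν : Fin 4, ginv (q + w) μ ν * Ricci (q + w) μ ν
        = ∑ μ : Fin 4, ∑ ν : Fin 4, (ginv q μ ν * Ricci q μ ν +
            ∑ s : SymIdx, ∑ J : MIdx4 2,
              w (s, J) * (ginv q μ ν * Kin q s.1.1 s.1.2 J.1 μ ν)) :=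
          Finset.sum_congr rfl fun μ _ => Finset.sum_congr rfl fun ν _ => hterm μ ν
      _ = (∑ μ : Fin 4, ∑ ν : Fin 4, ginv q μ ν * Ricci q μ ν) +
            ∑ μ : Fin 4, ∑ ν : Fin 4, ∑ s : SymIdx, ∑ J : MIdx4 2,
              w (s, J) * (ginv q μ ν * Kin q s.1.1 s.1.2 J.1 μ ν) := by
          rw [← Finset.sum_add_distrib]
          apply Finset.sum_congr rfl; intro μ _
          rw [← Finset.sum_add_distrib]
      _ = scalR q + ∑ s : SymIdx, ∑ J : MIdx4 2, w (s, J) *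
            ∑ μ : Fin 4, ∑ ν : Fin 4, ginv q μ ν * Kin q s.1.1 s.1.2 J.1 μ ν := by
          rw [swap_help]; rfl
  show Real.sqrt |(gmat (q + w)).det| * scalR (q + w) = _
  rw [hgm, h1, mul_add]
  congr 1
  rw [Finset.mul_sum]
  apply Finset.sum_congr rfl; intro s _
  rw [Finset.mul_sum]
  apply Finset.sum_congr rfl; intro J _
  unfold Kc
  ring

end Stmt15Aux
namespace Stmt15Aux
open MJet Matrix

/-! ### Algebraic evaluation of the coefficient -/

lemma sum_mul_del2 {a b : Fin 4} (hab : a ≤ b) (f : Fin 4 → ℝ) (x : Fin 4) :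
    ∑ lam : Fin 4, f lam * del2 x lam a b =
      (nn a b / 2) * (dd x a * f b + dd x b * f a) := by
  fin_cases a <;> fin_cases b <;>
    first
      | exact absurd hab (by decide)
      | (fin_cases x <;> simp [del2, dd, nn, Fin.sum_univ_four] <;> ring)

lemma sum_dd_right (f : Fin 4 → ℝ) (σ : Fin 4) :
    ∑ lam : Fin 4, f lam * dd lam σ = f σ := by
  simp [dd, mul_ite, mul_one, mul_zero, Finset.sum_ite_eq']

lemma sum_dd_left (f : Fin 4 → ℝ) (σ : Fin 4) :
    ∑ lam : Fin 4, dd lam σ * f lam = f σ := by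
  simp [dd, ite_mul, one_mul, zero_mul, Finset.sum_ite_eq']

/-- Pointwise evaluation of `Cp` with the `λ`-sum carried out. -/
lemma Cp_eval {k : ℕ} (q : MJet k) {a b : Fin 4} (hab : a ≤ b) (σ ρ μ' ν' : Fin 4) :
    Cp q a b σ ρ μ' ν' = (1 / 2) *
      ((nn a b / 2) * (dd ν' a * ginv q ρ b + dd ν' b * ginv q ρ a) * dd μ' σ +
       (nn a b / 2) * (dd μ' a * ginv q ρ b + dd μ' b * ginv q ρ a) * dd ν' σ -
       del2 μ' ν' a b * ginv q ρ σ) := by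
  unfold Cp
  congr 1
  have h1 : ∑ lam : Fin 4, ginv q ρ lam *
      (del2 ν' lam a b * dd μ' σ + del2 lam μ' a b * dd ν' σ - del2 μ' ν' a b * dd lam σ) =
      (∑ lam : Fin 4, (ginv q ρ lam * del2 ν' lam a b)) * dd μ' σ +
        (∑ lam : Fin 4, (ginv q ρ lam * del2 μ' lam a b)) * dd ν' σ -
        del2 μ' ν' a b * ∑ lam : Fin 4, ginv q ρ lam * dd lam σ := by
    rw [Finset.sum_mul, Finset.sum_mul, Finset.mul_sum, ← Finset.sum_add_distrib,
      ← Finset.sum_sub_distrib]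
    apply Finset.sum_congr rfl
    intro lam _
    rw [del2_symm lam μ']
    ring
  rw [h1, sum_mul_del2 hab (fun lam => ginv q ρ lam) ν',
    sum_mul_del2 hab (fun lam => ginv q ρ lam) μ', sum_dd_right]

/-- The `ρ`-trace of `Cp`. -/
lemma trace_Cp (q : MJet 2) {a b : Fin 4} (hab : a ≤ b) (σ ν' : Fin 4) :
    ∑ ρ : Fin 4, Cp q a b σ ρ ρ ν' = (nn a b / 2) * ginv q a b * dd ν' σ := by
  have h : ∀ ρ : Fin 4, Cp q a b σ ρ ρ ν' = (1 / 2) *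
      ((nn a b / 2) * (dd ν' a * ginv q ρ b + dd ν' b * ginv q ρ a) * dd ρ σ +
       (nn a b / 2) * (dd ρ a * ginv q ρ b + dd ρ b * ginv q ρ a) * dd ν' σ -
       del2 ρ ν' a b * ginv q ρ σ) := fun ρ => Cp_eval q hab σ ρ ρ ν'
  rw [Finset.sum_congr rfl fun ρ _ => h ρ]
  have e1 : ∑ ρ : Fin 4, (1 / 2 : ℝ) *
      ((nn a b / 2) * (dd ν' a * ginv q ρ b + dd ν' b * ginv q ρ a) * dd ρ σ +
       (nn a b / 2) * (dd ρ a * ginv q ρ b + dd ρ b * ginv q ρ a) * dd ν' σ -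
       del2 ρ ν' a b * ginv q ρ σ) =
      (1 / 2) * ((nn a b / 2) * (dd ν' a * ginv q σ b + dd ν' b * ginv q σ a) +
        (nn a b / 2) * ((ginv q a b + ginv q b a) * dd ν' σ) -
        (nn a b / 2) * (dd ν' a * ginv q b σ + dd ν' b * ginv q a σ)) := by
    rw [← Finset.mul_sum]
    congr 1
    have hsplit : ∀ ρ : Fin 4,
        ((nn a b / 2) * (dd ν' a * ginv q ρ b + dd ν' b * ginv q ρ a) * dd ρ σ +
         (nn a b / 2) * (dd ρ a * ginv q ρ b + dd ρ b * ginv q ρ a) * dd ν' σ -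
         del2 ρ ν' a b * ginv q ρ σ) =
        ((nn a b / 2) * (dd ν' a * ginv q ρ b + dd ν' b * ginv q ρ a)) * dd ρ σ +
          (nn a b / 2) * ((dd ρ a * ginv q ρ b + dd ρ b * ginv q ρ a) * dd ν' σ) -
          (ginv q ρ σ) * del2 ν' ρ a b := by
      intro ρ
      rw [del2_symm ν' ρ]
      ring
    rw [Finset.sum_congr rfl fun ρ _ => hsplit ρ, Finset.sum_sub_distrib,
      Finset.sum_add_distrib, sum_dd_right (fun ρ => (nn a b / 2) *
        (dd ν' a * ginv q ρ b + dd ν' b * ginv q ρ a)) σ,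
      sum_mul_del2 hab (fun ρ => ginv q ρ σ) ν']
    congr 1
    rw [← Finset.mul_sum]
    congr 1
    have : ∀ ρ : Fin 4, (dd ρ a * ginv q ρ b + dd ρ b * ginv q ρ a) * dd ν' σ =
        (dd ρ a * (ginv q ρ b * dd ν' σ) + dd ρ b * (ginv q ρ a * dd ν' σ)) := by
      intro ρ; ring
    rw [Finset.sum_congr rfl fun ρ _ => this ρ, Finset.sum_add_distrib,
      sum_dd_left (fun ρ => ginv q ρ b * dd ν' σ) a,
      sum_dd_left (fun ρ => ginv q ρ a * dd ν' σ) b]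
    ring
  rw [e1, ginv_symm q b a, ginv_symm q σ b, ginv_symm q σ a]
  ring

end Stmt15Aux
namespace Stmt15Aux
open MJet Matrix

lemma sumG_Cp (q : MJet 2) {a b : Fin 4} (hab : a ≤ b) (σ ρ : Fin 4) :
    ∑ μ' : Fin 4, ∑ ν' : Fin 4, ginv q μ' ν' * Cp q a b σ ρ μ' ν' =
      (nn a b / 2) * (ginv q σ a * ginv q ρ b + ginv q σ b * ginv q ρ a -
        ginv q a b * ginv q ρ σ) := by
  have h : ∀ μ' ν' : Fin 4, ginv q μ' ν' * Cp q a b σ ρ μ' ν' = (1 / 2) *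
      ((nn a b / 2) * ((ginv q μ' ν' * dd ν' a) * ginv q ρ b +
          (ginv q μ' ν' * dd ν' b) * ginv q ρ a) * dd μ' σ +
       (nn a b / 2) * (dd μ' a * ginv q ρ b + dd μ' b * ginv q ρ a) *
          (ginv q μ' ν' * dd ν' σ) -
       (ginv q μ' ν' * del2 μ' ν' a b) * ginv q ρ σ) := by
    intro μ' ν'
    rw [Cp_eval q hab σ ρ μ' ν']
    ring
  rw [Finset.sum_congr rfl fun μ' _ => Finset.sum_congr rfl fun ν' _ => h μ' ν']
  have hinner : ∀ μ' : Fin 4, ∑ ν' : Fin 4, (1 / 2 : ℝ) *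
      ((nn a b / 2) * ((ginv q μ' ν' * dd ν' a) * ginv q ρ b +
          (ginv q μ' ν' * dd ν' b) * ginv q ρ a) * dd μ' σ +
       (nn a b / 2) * (dd μ' a * ginv q ρ b + dd μ' b * ginv q ρ a) *
          (ginv q μ' ν' * dd ν' σ) -
       (ginv q μ' ν' * del2 μ' ν' a b) * ginv q ρ σ) = (1 / 2) *
      ((nn a b / 2) * (ginv q μ' a * ginv q ρ b + ginv q μ' b * ginv q ρ a) * dd μ' σ +
       (nn a b / 2) * (dd μ' a * ginv q ρ b + dd μ' b * ginv q ρ a) * ginv q μ' σ -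
       ((nn a b / 2) * (dd μ' a * ginv q μ' b + dd μ' b * ginv q μ' a)) * ginv q ρ σ) := by
    intro μ'
    rw [← Finset.mul_sum]
    congr 1
    rw [Finset.sum_sub_distrib, Finset.sum_add_distrib]
    congr 2
    · have : ∀ ν' : Fin 4,
          (nn a b / 2) * ((ginv q μ' ν' * dd ν' a) * ginv q ρ b +
            (ginv q μ' ν' * dd ν' b) * ginv q ρ a) * dd μ' σ =
          (nn a b / 2) * ((ginv q μ' ν' * dd ν' a) * (ginv q ρ b * dd μ' σ) +
            (ginv q μ' ν' * dd ν' b) * (ginv q ρ a * dd μ' σ)) := fun ν' => by ring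
      rw [Finset.sum_congr rfl fun ν' _ => this ν']
      rw [← Finset.mul_sum, Finset.sum_add_distrib]
      have e1 : ∑ ν' : Fin 4, (ginv q μ' ν' * dd ν' a) * (ginv q ρ b * dd μ' σ) =
          ginv q μ' a * (ginv q ρ b * dd μ' σ) := by
        rw [← Finset.sum_mul, sum_dd_right (fun ν' => ginv q μ' ν') a]
      have e2 : ∑ ν' : Fin 4, (ginv q μ' ν' * dd ν' b) * (ginv q ρ a * dd μ' σ) =
          ginv q μ' b * (ginv q ρ a * dd μ' σ) := by
        rw [← Finset.sum_mul, sum_dd_right (fun ν' => ginv q μ' ν') b]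
      rw [e1, e2]
      ring
    · rw [← Finset.mul_sum, sum_dd_right (fun ν' => ginv q μ' ν') σ]
    · rw [← Finset.sum_mul, sum_mul_del2 hab (fun ν' => ginv q μ' ν') μ']
  rw [Finset.sum_congr rfl fun μ' _ => hinner μ']
  have hfinal : ∑ μ' : Fin 4, (1 / 2 : ℝ) *
      ((nn a b / 2) * (ginv q μ' a * ginv q ρ b + ginv q μ' b * ginv q ρ a) * dd μ' σ +
       (nn a b / 2) * (dd μ' a * ginv q ρ b + dd μ' b * ginv q ρ a) * ginv q μ' σ -
       ((nn a b / 2) * (dd μ' a * ginv q μ' b + dd μ' b * ginv q μ' a)) * ginv q ρ σ) =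
      (1 / 2) * ((nn a b / 2) * (ginv q σ a * ginv q ρ b + ginv q σ b * ginv q ρ a) +
        (nn a b / 2) * (ginv q a σ * ginv q ρ b + ginv q b σ * ginv q ρ a) -
        (nn a b / 2) * (ginv q a b + ginv q b a) * ginv q ρ σ) := by
    rw [← Finset.mul_sum]
    congr 1
    rw [Finset.sum_sub_distrib, Finset.sum_add_distrib]
    congr 2
    · rw [sum_dd_right (fun μ' => (nn a b / 2) *
        (ginv q μ' a * ginv q ρ b + ginv q μ' b * ginv q ρ a)) σ]
    · have : ∀ μ' : Fin 4,
          (nn a b / 2) * (dd μ' a * ginv q ρ b + dd μ' b * ginv q ρ a) * ginv q μ' σ =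
          (nn a b / 2) * (dd μ' a * (ginv q ρ b * ginv q μ' σ) +
            dd μ' b * (ginv q ρ a * ginv q μ' σ)) := fun μ' => by ring
      rw [Finset.sum_congr rfl fun μ' _ => this μ', ← Finset.mul_sum,
        Finset.sum_add_distrib,
        sum_dd_left (fun μ' => ginv q ρ b * ginv q μ' σ) a,
        sum_dd_left (fun μ' => ginv q ρ a * ginv q μ' σ) b]
      ring
    · have : ∀ μ' : Fin 4,
          ((nn a b / 2) * (dd μ' a * ginv q μ' b + dd μ' b * ginv q μ' a)) * ginv q ρ σ =
          (nn a b / 2) * (dd μ' a * (ginv q μ' b * ginv q ρ σ) +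
            dd μ' b * (ginv q μ' a * ginv q ρ σ)) := fun μ' => by ring
      rw [Finset.sum_congr rfl fun μ' _ => this μ', ← Finset.mul_sum,
        Finset.sum_add_distrib,
        sum_dd_left (fun μ' => ginv q μ' b * ginv q ρ σ) a,
        sum_dd_left (fun μ' => ginv q μ' a * ginv q ρ σ) b]
      ring
  rw [hfinal, ginv_symm q a σ, ginv_symm q b σ, ginv_symm q b a]
  ring

lemma sum_cond {μ ν : Fin 4} (hμν : μ ≤ ν) (F : Fin 4 → Fin 4 → ℝ) :
    ∑ σ : Fin 4, ∑ ρ : Fin 4,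
        (if (σ = μ ∧ ρ = ν) ∨ (σ = ν ∧ ρ = μ) then F σ ρ else 0) =
      (nn μ ν / 2) * (F μ ν + F ν μ) := by
  fin_cases μ <;> fin_cases ν <;>
    first
      | exact absurd hμν (by decide)
      | (simp [nn, Fin.sum_univ_four]; try ring)

lemma ite_sum2 (c : Prop) [Decidable c] (G F : Fin 4 → Fin 4 → ℝ) :
    ∑ μ' : Fin 4, ∑ ν' : Fin 4, G μ' ν' * (if c then F μ' ν' else 0) =
      if c then ∑ μ' : Fin 4, ∑ ν' : Fin 4, G μ' ν' * F μ' ν' else 0 := by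
  split <;> simp

lemma ite_sum1 (c : Prop) [Decidable c] (g f : Fin 4 → ℝ) :
    ∑ ν' : Fin 4, g ν' * (if c then f ν' else 0) =
      if c then ∑ ν' : Fin 4, g ν' * f ν' else 0 := by
  split <;> simp

lemma swap_help2 (f : Fin 4 → Fin 4 → Fin 4 → Fin 4 → ℝ) :
    ∑ μ' : Fin 4, ∑ ν' : Fin 4, ∑ ρ : Fin 4, ∑ σ : Fin 4, f μ' ν' ρ σ =
      ∑ ρ : Fin 4, ∑ σ : Fin 4, ∑ μ' : Fin 4, ∑ ν' : Fin 4, f μ' ν' ρ σ := by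
  calc ∑ μ' : Fin 4, ∑ ν' : Fin 4, ∑ ρ : Fin 4, ∑ σ : Fin 4, f μ' ν' ρ σ
      = ∑ μ' : Fin 4, ∑ ρ : Fin 4, ∑ ν' : Fin 4, ∑ σ : Fin 4, f μ' ν' ρ σ :=
        Finset.sum_congr rfl fun μ' _ => Finset.sum_comm
    _ = ∑ ρ : Fin 4, ∑ μ' : Fin 4, ∑ ν' : Fin 4, ∑ σ : Fin 4, f μ' ν' ρ σ :=
        Finset.sum_comm
    _ = ∑ ρ : Fin 4, ∑ μ' : Fin 4, ∑ σ : Fin 4, ∑ ν' : Fin 4, f μ' ν' ρ σ :=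
        Finset.sum_congr rfl fun ρ _ => Finset.sum_congr rfl fun μ' _ => Finset.sum_comm
    _ = ∑ ρ : Fin 4, ∑ σ : Fin 4, ∑ μ' : Fin 4, ∑ ν' : Fin 4, f μ' ν' ρ σ :=
        Finset.sum_congr rfl fun ρ _ => Finset.sum_comm

end Stmt15Aux
namespace Stmt15Aux
open MJet Matrix

lemma Kc_formula (q : MJet 2) {a b μ ν : Fin 4} (hab : a ≤ b) (hμν : μ ≤ ν) :
    Kc q a b (fun j => e μ j + e ν j) =
      nn μ ν * ((nn a b / 2) * Real.sqrt |(gmat q).det| *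
        (ginv q a μ * ginv q b ν + ginv q a ν * ginv q b μ -
          2 * ginv q a b * ginv q μ ν)) := by
  unfold Kc Kin
  simp only [e_add_eq_iff]
  set G := ginv q with hG
  set c : ℝ := nn a b / 2 with hc
  -- Term 1 contraction
  have hT1 : ∑ μ' : Fin 4, ∑ ν' : Fin 4, G μ' ν' *
      (∑ ρ : Fin 4, ∑ σ : Fin 4,
        if (σ = μ ∧ ρ = ν) ∨ (σ = ν ∧ ρ = μ) then Cp q a b σ ρ μ' ν' else 0) =
      (nn μ ν / 2) * ((c * (G μ a * G ν b + G μ b * G ν a - G a b * G ν μ)) +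
        (c * (G ν a * G μ b + G ν b * G μ a - G a b * G μ ν))) := by
    calc ∑ μ' : Fin 4, ∑ ν' : Fin 4, G μ' ν' *
        (∑ ρ : Fin 4, ∑ σ : Fin 4,
          if (σ = μ ∧ ρ = ν) ∨ (σ = ν ∧ ρ = μ) then Cp q a b σ ρ μ' ν' else 0)
        = ∑ μ' : Fin 4, ∑ ν' : Fin 4, ∑ ρ : Fin 4, ∑ σ : Fin 4, G μ' ν' *
          (if (σ = μ ∧ ρ = ν) ∨ (σ = ν ∧ ρ = μ) then Cp q a b σ ρ μ' ν' else 0) := by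
          apply Finset.sum_congr rfl; intro μ' _
          apply Finset.sum_congr rfl; intro ν' _
          rw [Finset.mul_sum]
          apply Finset.sum_congr rfl; intro ρ _
          rw [Finset.mul_sum]
      _ = ∑ ρ : Fin 4, ∑ σ : Fin 4, ∑ μ' : Fin 4, ∑ ν' : Fin 4, G μ' ν' *
          (if (σ = μ ∧ ρ = ν) ∨ (σ = ν ∧ ρ = μ) then Cp q a b σ ρ μ' ν' else 0) :=
          swap_help2 _
      _ = ∑ ρ : Fin 4, ∑ σ : Fin 4,
          (if (σ = μ ∧ ρ = ν) ∨ (σ = ν ∧ ρ = μ)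
            then c * (G σ a * G ρ b + G σ b * G ρ a - G a b * G ρ σ) else 0) := by
          apply Finset.sum_congr rfl; intro ρ _
          apply Finset.sum_congr rfl; intro σ _
          rw [ite_sum2]
          exact if_congr Iff.rfl (sumG_Cp q hab σ ρ) rfl
      _ = ∑ σ : Fin 4, ∑ ρ : Fin 4,
          (if (σ = μ ∧ ρ = ν) ∨ (σ = ν ∧ ρ = μ)
            then c * (G σ a * G ρ b + G σ b * G ρ a - G a b * G ρ σ) else 0) :=
          Finset.sum_comm
      _ = (nn μ ν / 2) * ((c * (G μ a * G ν b + G μ b * G ν a - G a b * G ν μ)) +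
          (c * (G ν a * G μ b + G ν b * G μ a - G a b * G μ ν))) :=
          sum_cond hμν _
  -- Term 2 contraction
  have hT2 : ∑ μ' : Fin 4, ∑ ν' : Fin 4, G μ' ν' *
      (∑ σ : Fin 4, if (σ = μ ∧ μ' = ν) ∨ (σ = ν ∧ μ' = μ)
        then ∑ ρ : Fin 4, Cp q a b σ ρ ρ ν' else 0) =
      (nn μ ν / 2) * ((c * G a b * G ν μ) + (c * G a b * G μ ν)) := by
    have hstep : ∀ μ' : Fin 4, ∑ ν' : Fin 4, G μ' ν' *
        (∑ σ : Fin 4, if (σ = μ ∧ μ' = ν) ∨ (σ = ν ∧ μ' = μ)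
          then ∑ ρ : Fin 4, Cp q a b σ ρ ρ ν' else 0) =
        ∑ σ : Fin 4, (if (σ = μ ∧ μ' = ν) ∨ (σ = ν ∧ μ' = μ)
          then c * G a b * G μ' σ else 0) := by
      intro μ'
      calc ∑ ν' : Fin 4, G μ' ν' *
          (∑ σ : Fin 4, if (σ = μ ∧ μ' = ν) ∨ (σ = ν ∧ μ' = μ)
            then ∑ ρ : Fin 4, Cp q a b σ ρ ρ ν' else 0)
          = ∑ ν' : Fin 4, ∑ σ : Fin 4, G μ' ν' *
            (if (σ = μ ∧ μ' = ν) ∨ (σ = ν ∧ μ' = μ)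
              then c * G a b * dd ν' σ else 0) := by
            apply Finset.sum_congr rfl; intro ν' _
            rw [Finset.mul_sum]
            apply Finset.sum_congr rfl; intro σ _
            exact congrArg (G μ' ν' * ·) (if_congr Iff.rfl (trace_Cp q hab σ ν') rfl)
        _ = ∑ σ : Fin 4, ∑ ν' : Fin 4, G μ' ν' *
            (if (σ = μ ∧ μ' = ν) ∨ (σ = ν ∧ μ' = μ)
              then c * G a b * dd ν' σ else 0) := Finset.sum_comm
        _ = ∑ σ : Fin 4, (if (σ = μ ∧ μ' = ν) ∨ (σ = ν ∧ μ' = μ)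
              then c * G a b * G μ' σ else 0) := by
            apply Finset.sum_congr rfl; intro σ _
            rw [ite_sum1]
            refine if_congr Iff.rfl ?_ rfl
            have : ∀ ν' : Fin 4, G μ' ν' * (c * G a b * dd ν' σ) =
                (c * G a b) * (G μ' ν' * dd ν' σ) := fun ν' => by ring
            rw [Finset.sum_congr rfl fun ν' _ => this ν', ← Finset.mul_sum,
              sum_dd_right (fun ν' => G μ' ν') σ]
    calc ∑ μ' : Fin 4, ∑ ν' : Fin 4, G μ' ν' *
        (∑ σ : Fin 4, if (σ = μ ∧ μ' = ν) ∨ (σ = ν ∧ μ' = μ)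
          then ∑ ρ : Fin 4, Cp q a b σ ρ ρ ν' else 0)
        = ∑ μ' : Fin 4, ∑ σ : Fin 4, (if (σ = μ ∧ μ' = ν) ∨ (σ = ν ∧ μ' = μ)
            then c * G a b * G μ' σ else 0) :=
          Finset.sum_congr rfl fun μ' _ => hstep μ'
      _ = ∑ σ : Fin 4, ∑ μ' : Fin 4, (if (σ = μ ∧ μ' = ν) ∨ (σ = ν ∧ μ' = μ)
            then c * G a b * G μ' σ else 0) := Finset.sum_comm
      _ = (nn μ ν / 2) * ((c * G a b * G ν μ) + (c * G a b * G μ ν)) :=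
          sum_cond hμν (fun σ ρ' => c * G a b * G ρ' σ)
  -- combine
  have hsplit : ∑ μ' : Fin 4, ∑ ν' : Fin 4, G μ' ν' *
      ((∑ ρ : Fin 4, ∑ σ : Fin 4,
        if (σ = μ ∧ ρ = ν) ∨ (σ = ν ∧ ρ = μ) then Cp q a b σ ρ μ' ν' else 0) -
       ∑ σ : Fin 4, if (σ = μ ∧ μ' = ν) ∨ (σ = ν ∧ μ' = μ)
        then ∑ ρ : Fin 4, Cp q a b σ ρ ρ ν' else 0) =
      (∑ μ' : Fin 4, ∑ ν' : Fin 4, G μ' ν' *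
        (∑ ρ : Fin 4, ∑ σ : Fin 4,
          if (σ = μ ∧ ρ = ν) ∨ (σ = ν ∧ ρ = μ) then Cp q a b σ ρ μ' ν' else 0)) -
      ∑ μ' : Fin 4, ∑ ν' : Fin 4, G μ' ν' *
        (∑ σ : Fin 4, if (σ = μ ∧ μ' = ν) ∨ (σ = ν ∧ μ' = μ)
          then ∑ ρ : Fin 4, Cp q a b σ ρ ρ ν' else 0) := by
    rw [← Finset.sum_sub_distrib]
    apply Finset.sum_congr rfl; intro μ' _
    rw [← Finset.sum_sub_distrib]
    apply Finset.sum_congr rfl; intro ν' _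
    ring
  rw [hsplit, hT1, hT2, hG]
  rw [ginv_symm q μ a, ginv_symm q μ b, ginv_symm q ν a, ginv_symm q ν b, ginv_symm q ν μ]
  ring

end Stmt15Aux
namespace Stmt15Aux
open MJet Matrix

lemma pdg_EH {q : MJet 2} (hq : (gmat q).det ≠ 0) {a b : Fin 4} (hab : a ≤ b)
    (μ ν : Fin 4) :
    pdg a b (fun j => e μ j + e ν j) EH q = Kc q a b (fun j => e μ j + e ν j) := by
  set E : Fin 4 → ℕ := fun j => e μ j + e ν j with hEdef
  have hE : ∑ i, E i ≤ 2 := by rw [hEdef, e_add_sum]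
  set v : MJet 2 := fun sI => if sI.1.1 = (a, b) ∧ sI.2.1 = E then (1:ℝ) else 0 with hv
  have hsupp : Supp2 v := by
    intro s I hI
    show (if s.1 = (a, b) ∧ I.1 = E then (1:ℝ) else 0) = 0
    rw [if_neg]
    rintro ⟨-, h2⟩
    exact hI (by rw [h2, hEdef, e_add_sum])
  have hline : ∀ t : ℝ, EH (q + t • v) = EH q + t * Kc q a b E := by
    intro t
    have hsupp' : Supp2 (t • v) := by
      intro s I hI
      show t * v (s, I) = 0
      rw [hsupp s I hI, mul_zero]
    rw [EH_add_supp2 hq hsupp']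
    congr 1
    rw [Finset.sum_eq_single (⟨(a, b), hab⟩ : SymIdx)]
    · rw [Finset.sum_eq_single (⟨E, hE⟩ : MIdx4 2)]
      · show (t * v (⟨(a, b), hab⟩, ⟨E, hE⟩)) * Kc q a b E = t * Kc q a b E
        rw [hv]
        beta_reduce
        rw [if_pos ⟨rfl, rfl⟩, mul_one]
      · intro J _ hJ
        show (t * v (⟨(a, b), hab⟩, J)) * Kc q a b J.1 = 0
        rw [hv]
        beta_reduce
        rw [if_neg, mul_zero, zero_mul]
        rintro ⟨-, h2⟩
        exact hJ (Subtype.ext h2)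
      · intro h
        exact absurd (Finset.mem_univ _) h
    · intro s _ hs
      apply Finset.sum_eq_zero
      intro J _
      show (t * v (s, J)) * Kc q s.1.1 s.1.2 J.1 = 0
      rw [hv]
      beta_reduce
      rw [if_neg, mul_zero, zero_mul]
      rintro ⟨h1, -⟩
      exact hs (Subtype.ext h1)
    · intro h
      exact absurd (Finset.mem_univ _) h
  unfold pdg
  exact fderiv_apply_of_line (differentiableAt_EH hq) hline

lemma Kc_congr {q q' : MJet 2} (h : gmat q = gmat q') (a b : Fin 4) (J : Fin 4 → ℕ) :
    Kc q a b J = Kc q' a b J := by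
  simp only [Kc, Kin, Cp, MJet.ginv, h]

lemma nn_ne_zero (μ ν : Fin 4) : nn μ ν ≠ 0 := by
  unfold nn
  split <;> norm_num

end Stmt15Aux

open Stmt15Aux in
/-- Second-derivative coefficients of the Hilbert Lagrangian.
Where `(g_{αβ})` is invertible, for `α ≤ β`, `μ ≤ ν`:
`(1/n(μν)) ∂L/∂g_{αβ,μν} = (n(αβ)/2) √|det g| (g^{αμ}g^{βν} + g^{αν}g^{βμ} − 2g^{αβ}g^{μν})`.
In particular `∂L/∂g_{αβ,μν}` depends only on the zeroth-order variables, and `L` is an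
affine function of the second-order variables. -/
theorem stmt15 (p : MJet 2) (hp : (MJet.gmat p).det ≠ 0) :
    (∀ a b μ ν : Fin 4, a ≤ b → μ ≤ ν →
      (1 / MJet.nn μ ν) * MJet.pdg a b (fun j => MJet.e μ j + MJet.e ν j) MJet.EH p =
        (MJet.nn a b / 2) * Real.sqrt |(MJet.gmat p).det| *
          (MJet.ginv p a μ * MJet.ginv p b ν + MJet.ginv p a ν * MJet.ginv p b μ -
            2 * MJet.ginv p a b * MJet.ginv p μ ν)) ∧
    (∀ q : MJet 2,
      (∀ (s : SymIdx) (I : MIdx4 2), (∑ i, I.1 i) = 0 → q (s, I) = p (s, I)) →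
      ∀ a b μ ν : Fin 4, a ≤ b → μ ≤ ν →
        MJet.pdg a b (fun j => MJet.e μ j + MJet.e ν j) MJet.EH q =
          MJet.pdg a b (fun j => MJet.e μ j + MJet.e ν j) MJet.EH p) ∧
    (∀ u v : MJet 2,
      (∀ (s : SymIdx) (I : MIdx4 2), (∑ i, I.1 i) ≠ 2 → u (s, I) = 0) →
      (∀ (s : SymIdx) (I : MIdx4 2), (∑ i, I.1 i) ≠ 2 → v (s, I) = 0) →
      MJet.EH (p + u + v) - MJet.EH (p + u) - MJet.EH (p + v) + MJet.EH p = 0) := by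
  refine ⟨?_, ?_, ?_⟩
  · intro a b μ ν hab hμν
    rw [pdg_EH hp hab μ ν, Kc_formula p hab hμν, ← mul_assoc, one_div,
      inv_mul_cancel₀ (nn_ne_zero μ ν), one_mul]
  · intro q hq0 a b μ ν hab hμν
    have hgm : MJet.gmat q = MJet.gmat p := by
      ext x y
      show MJet.gv q x y (fun _ => 0) = MJet.gv p x y (fun _ => 0)
      unfold MJet.gv
      rw [dif_pos (by simp : ∑ i, (0:ℕ) ≤ 2)]
      rw [dif_pos (by simp : ∑ i, (0:ℕ) ≤ 2)]
      by_cases hxy : x ≤ y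
      · rw [dif_pos hxy, dif_pos hxy]
        exact hq0 _ _ (by simp)
      · rw [dif_neg hxy, dif_neg hxy]
        exact hq0 _ _ (by simp)
    have hdq : (MJet.gmat q).det ≠ 0 := by rw [hgm]; exact hp
    rw [pdg_EH hdq hab μ ν, pdg_EH hp hab μ ν, Kc_congr hgm]
  · intro u v hu hv
    have hgu : MJet.gmat (p + u) = MJet.gmat p := gmat_add_supp2 hu
    have e2 : MJet.EH (p + v) = MJet.EH p +
        ∑ s : SymIdx, ∑ J : MIdx4 2, v (s, J) * Kc p s.1.1 s.1.2 J.1 :=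
      EH_add_supp2 hp hv
    have e3 : MJet.EH (p + u + v) = MJet.EH (p + u) +
        ∑ s : SymIdx, ∑ J : MIdx4 2, v (s, J) * Kc p s.1.1 s.1.2 J.1 := by
      rw [EH_add_supp2 (by rw [hgu]; exact hp) hv]
      congr 1
      apply Finset.sum_congr rfl; intro s _
      apply Finset.sum_congr rfl; intro J _
      rw [Kc_congr hgu]
    linear_combination e3 - e2
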